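/- arXiv:2007.06118 — 4 statements merged into one kernel-verified Lean document; each statement's English description precedes it below -/
import Mathlib

section
/- Let f : ℝ^n → ℝ be a continuous convex function, and let T and C be nonempty closed convex subsets of ℝ^n with T ∩ C nonempty. Suppose z̃ minimizes f over T and the minimum of f over T ∩ C is attained at some point. If z̃ ∉ C, then there exists a point z* on the boundary of C with z* ∈ T such that z* minimizes f over T ∩ C. -/
/-! Take a minimizer `w` of `f` over `T ∩ C`. The segment `[w, z̃]` lies in `T`, is connected,
and runs from inside `C` to outside it, so it meets `frontier C` at some `z*`. Convexity bounds
`f z*` by `max (f w) (f z̃) = f w`, since `z̃` minimizes `f` over `T ∋ w`. -/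

theorem IsPreconnected.inter_frontier_nonempty {X : Type*} [TopologicalSpace X] {s C : Set X}
    (hs : IsPreconnected s) (hin : (s ∩ C).Nonempty) (hout : (s \ C).Nonempty) :
    (s ∩ frontier C).Nonempty := by
  have := Subtype.preconnectedSpace hs
  obtain ⟨x, hxs, hxC⟩ := hin
  obtain ⟨y, hys, hyC⟩ := hout
  have hfr : (frontier (((↑) : s → X) ⁻¹' C)).Nonempty :=
    nonempty_frontier_iff.mpr
      ⟨⟨⟨x, hxs⟩, hxC⟩, fun h => hyC (Set.eq_univ_iff_forall.mp h ⟨y, hys⟩)⟩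
  obtain ⟨z, hz⟩ := hfr
  exact ⟨z, z.2, continuous_subtype_val.frontier_preimage_subset C hz⟩

theorem ConvexOn.exists_mem_frontier_segment_le {E : Type*} [NormedAddCommGroup E]
    [NormedSpace ℝ E] {f : E → ℝ} {s C : Set E} (hf : ConvexOn ℝ s f)
    {w z : E} (hws : w ∈ s) (hzs : z ∈ s) (hw : w ∈ C) (hz : z ∉ C) (hfz : f z ≤ f w) :
    ∃ y ∈ segment ℝ w z, y ∈ frontier C ∧ f y ≤ f w := by
  obtain ⟨y, hy_seg, hy_fr⟩ := (convex_segment w z).isPreconnected.inter_frontier_nonempty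
    ⟨w, left_mem_segment ℝ w z, hw⟩ ⟨z, right_mem_segment ℝ w z, hz⟩
  refine ⟨y, hy_seg, hy_fr, ?_⟩
  calc f y ≤ max (f w) (f z) := hf.le_on_segment hws hzs hy_seg
    _ = f w := max_eq_left hfz

theorem stmt1_general {n : ℕ} (f : EuclideanSpace ℝ (Fin n) → ℝ)
    (hf_conv : ConvexOn ℝ Set.univ f)
    (T C : Set (EuclideanSpace ℝ (Fin n)))
    (hT_conv : Convex ℝ T)
    (ztilde : EuclideanSpace ℝ (Fin n)) (hz_mem : ztilde ∈ T)
    (hz_min : ∀ z ∈ T, f ztilde ≤ f z)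
    (h_attained : ∃ w ∈ T ∩ C, ∀ z ∈ T ∩ C, f w ≤ f z)
    (hzC : ztilde ∉ C) :
    ∃ zstar, zstar ∈ T ∧ zstar ∈ frontier C ∧ ∀ z ∈ T ∩ C, f zstar ≤ f z := by
  obtain ⟨w, ⟨hwT, hwC⟩, hw_min⟩ := h_attained
  obtain ⟨zstar, hseg, hfr, hle⟩ :=
    hf_conv.exists_mem_frontier_segment_le trivial trivial hwC hzC (hz_min w hwT)
  exact ⟨zstar, hT_conv.segment_subset hwT hz_mem hseg, hfr,
    fun z hz => hle.trans (hw_min z hz)⟩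

/-- If z̃ minimizes a continuous convex f over T, the minimum over T ∩ C is
attained, and z̃ ∉ C, then some minimizer of f over T ∩ C lies in T ∩ frontier C. -/
theorem stmt1 {n : ℕ} (f : EuclideanSpace ℝ (Fin n) → ℝ)
    (hf_cont : Continuous f) (hf_conv : ConvexOn ℝ Set.univ f)
    (T C : Set (EuclideanSpace ℝ (Fin n)))
    (hT_ne : T.Nonempty) (hT_closed : IsClosed T) (hT_conv : Convex ℝ T)
    (hC_ne : C.Nonempty) (hC_closed : IsClosed C) (hC_conv : Convex ℝ C)
    (hTC : (T ∩ C).Nonempty)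
    (ztilde : EuclideanSpace ℝ (Fin n)) (hz_mem : ztilde ∈ T)
    (hz_min : ∀ z ∈ T, f ztilde ≤ f z)
    (h_attained : ∃ w ∈ T ∩ C, ∀ z ∈ T ∩ C, f w ≤ f z)
    (hzC : ztilde ∉ C) :
    ∃ zstar, zstar ∈ T ∧ zstar ∈ frontier C ∧ ∀ z ∈ T ∩ C, f zstar ≤ f z :=
  stmt1_general f hf_conv T C hT_conv ztilde hz_mem hz_min h_attained hzC
end

section
/- Let G ∈ ℝ^{m×k} and g_{k+1} ∈ ℝ^m with rank([G g_{k+1}]) = k+1. Denote by s(G', b') the unique solution of min_{y ≥ 0} ‖G' y − b'‖ for any full-column-rank G' and vector b'. Then the unique solution (y*, y*_{k+1}) of min_{y ≥ 0, y_{k+1} ≥ 0} ‖G y + g_{k+1} y_{k+1} − b‖ satisfies y*_{k+1} = (1/‖g_{k+1}‖²)·[g_{k+1}ᵀ(b − G·s(G̃, b̃))]₊ and y* = s(G, b − g_{k+1} y*_{k+1}), where G̃ = (I − g_{k+1} g_{k+1}ᵀ/‖g_{k+1}‖²)G and b̃ = (I − g_{k+1} g_{k+1}ᵀ/‖g_{k+1}‖²)b.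 -/
open scoped RealInnerProductSpace

/-!
Both sub-problems are characterised by their KKT conditions. Since `g` is orthogonal to `G̃` and
`b̃`, the residual `S` of `ŷ = s(G̃, b̃)` equals `Gŷ + t g - b` with `t = ⟪g, b - Gŷ⟫ / ‖g‖²`; it
satisfies the KKT conditions for `G` and `⟪g, S⟫ = 0`. Let `R` be the residual of the candidate
`(s(G, b - y* g), y*)`, where `y* = max t 0`. Pairing the two sets of KKT conditions gives
`‖R - S‖² ≤ (y* - t) ⟪g, R⟫`, so either `R = S` or `t < 0 = y*` and `⟪g, R⟫ > 0`. Either way `R`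
also satisfies the KKT condition in the direction `g`, so the candidate is optimal for `[G g]`;
it is the only optimum because optimal residuals coincide and `[G g]` has independent columns.
-/

theorem isMinOn_norm_sub_iff_real_inner_le_zero {F : Type*} [NormedAddCommGroup F]
    [InnerProductSpace ℝ F] {K : Set F} (hK : Convex ℝ K) {u p : F} (hp : p ∈ K) :
    IsMinOn (fun q => ‖u - q‖) K p ↔ ∀ q ∈ K, ⟪u - p, q - p⟫ ≤ 0 := by
  have : Nonempty K := ⟨⟨p, hp⟩⟩
  have hbdd : BddBelow (Set.range fun q : K => ‖u - q‖) :=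
    ⟨0, Set.forall_mem_range.2 fun _ => norm_nonneg _⟩
  rw [← norm_eq_iInf_iff_real_inner_le_zero hK hp]
  constructor
  · intro h
    exact le_antisymm (le_ciInf fun q => h q.2) (ciInf_le hbdd ⟨p, hp⟩)
  · intro h q hq
    simpa [h] using ciInf_le hbdd ⟨q, hq⟩

theorem forall_nonneg_sum_sub_mul_nonneg_iff {ι : Type*} [Fintype ι] {z c : ι → ℝ}
    (hz : ∀ i, 0 ≤ z i) :
    (∀ w : ι → ℝ, (∀ i, 0 ≤ w i) → 0 ≤ ∑ i, (w i - z i) * c i) ↔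
      (∀ i, 0 ≤ c i) ∧ ∀ i, z i * c i = 0 := by
  classical
  have hsplit : ∀ w : ι → ℝ, ∑ i, (w i - z i) * c i = ∑ i, w i * c i - ∑ i, z i * c i := by
    intro w; simp only [sub_mul, Finset.sum_sub_distrib]
  constructor
  · intro h
    have hc : ∀ i, 0 ≤ c i := by
      intro i
      have hw : ∀ j, 0 ≤ z j + if j = i then 1 else 0 := fun j =>
        add_nonneg (hz j) (by split_ifs <;> norm_num)
      simpa using h _ hw
    have hzc : ∀ i, 0 ≤ z i * c i := fun i => mul_nonneg (hz i) (hc i)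
    have hsum : ∑ i, z i * c i = 0 :=
      le_antisymm (by simpa [hsplit] using h 0 fun _ => le_rfl) (Finset.sum_nonneg fun i _ => hzc i)
    exact ⟨hc, fun i => (Finset.sum_eq_zero_iff_of_nonneg fun i _ => hzc i).1 hsum i
      (Finset.mem_univ i)⟩
  · rintro ⟨hc, hzc⟩ w hw
    rw [hsplit, Finset.sum_eq_zero fun i _ => hzc i, sub_zero]
    exact Finset.sum_nonneg fun i _ => mul_nonneg (hw i) (hc i)

section Snoc

variable {k : ℕ}

theorem sum_snoc_smul_snoc {R M : Type*} [Semiring R] [AddCommMonoid M] [Module R M]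
    (z : Fin k → R) (t : R) (v : Fin k → M) (g : M) :
    ∑ i, (Fin.snoc z t : Fin (k + 1) → R) i • (Fin.snoc v g : Fin (k + 1) → M) i =
      (∑ i, z i • v i) + t • g := by
  simp [Fin.sum_univ_castSucc]

theorem LinearIndependent.sub_smul_of_snoc {R M : Type*} [Ring R] [AddCommGroup M] [Module R M]
    {v : Fin k → M} {g : M} (h : LinearIndependent R (Fin.snoc v g : Fin (k + 1) → M))
    (a : Fin k → R) : LinearIndependent R fun i => v i - a i • g := by
  rw [Fintype.linearIndependent_iff] at h ⊢
  intro c hc i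
  have hsum : ∑ j, (Fin.snoc c (-∑ j, c j * a j) : Fin (k + 1) → R) j •
      (Fin.snoc v g : Fin (k + 1) → M) j = 0 := by
    rw [sum_snoc_smul_snoc, ← hc, neg_smul, Finset.sum_smul]
    simp only [smul_sub, ← smul_smul, Finset.sum_sub_distrib, ← sub_eq_add_neg]
  simpa using h _ hsum i.castSucc

end Snoc

section NNLS

variable {ι E : Type*} [NormedAddCommGroup E] [InnerProductSpace ℝ E]

/-- The Karush–Kuhn–Tucker conditions of `min_{z ≥ 0} ‖∑ i, z i • v i - b‖`, stated for the
residual `r = ∑ i, z i • v i - b`. -/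
structure IsNNLSKKT (v : ι → E) (z : ι → ℝ) (r : E) : Prop where
  nonneg : ∀ i, 0 ≤ z i
  inner_nonneg : ∀ i, 0 ≤ ⟪v i, r⟫
  mul_inner_eq_zero : ∀ i, z i * ⟪v i, r⟫ = 0

theorem IsNNLSKKT.of_sub_smul {v : ι → E} {z a : ι → ℝ} {g r : E}
    (h : IsNNLSKKT (fun i => v i - a i • g) z r) (hg : ⟪g, r⟫ = 0) : IsNNLSKKT v z r := by
  have hv : ∀ i, ⟪v i - a i • g, r⟫ = ⟪v i, r⟫ := fun i => by
    rw [inner_sub_left, real_inner_smul_left, hg, mul_zero, sub_zero]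
  exact ⟨h.nonneg, fun i => hv i ▸ h.inner_nonneg i, fun i => hv i ▸ h.mul_inner_eq_zero i⟩

variable [Fintype ι]

theorem real_inner_sum_smul_left (w : ι → ℝ) (v : ι → E) (x : E) :
    ⟪∑ i, w i • v i, x⟫ = ∑ i, w i * ⟪v i, x⟫ := by
  simp only [sum_inner, real_inner_smul_left]

def IsNNLSSolution (v : ι → E) (b : E) (z : ι → ℝ) : Prop :=
  (∀ i, 0 ≤ z i) ∧
    ∀ w : ι → ℝ, (∀ i, 0 ≤ w i) → ‖(∑ i, z i • v i) - b‖ ≤ ‖(∑ i, w i • v i) - b‖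

variable {v : ι → E} {b : E} {z : ι → ℝ}

theorem isNNLSSolution_iff_forall_inner_nonneg (hz : ∀ i, 0 ≤ z i) :
    IsNNLSSolution v b z ↔ ∀ w : ι → ℝ, (∀ i, 0 ≤ w i) →
      0 ≤ ∑ i, (w i - z i) * ⟪v i, (∑ j, z j • v j) - b⟫ := by
  set f := Fintype.linearCombination ℝ v
  have hf : ∀ w, f w = ∑ i, w i • v i := Fintype.linearCombination_apply ℝ v
  have hK : Convex ℝ (f '' Set.Ici 0) := (convex_Ici 0).linear_image f
  have hmem : ∀ {w : ι → ℝ}, 0 ≤ w → f w ∈ f '' Set.Ici 0 := fun hw => ⟨_, hw, rfl⟩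
  have hmin := isMinOn_norm_sub_iff_real_inner_le_zero hK (u := b) (hmem (Pi.le_def.2 hz))
  simp only [IsMinOn, IsMinFilter, Filter.eventually_principal, Set.forall_mem_image,
    Set.mem_Ici, Pi.le_def, Pi.zero_apply, hf, norm_sub_rev b] at hmin
  rw [IsNNLSSolution, and_iff_right hz, hmin]
  refine forall₂_congr fun w _ => ?_
  rw [← neg_nonneg, ← inner_neg_left, neg_sub, ← Finset.sum_sub_distrib, ← real_inner_sum_smul_left]
  simp only [sub_smul, real_inner_comm]

theorem isNNLSSolution_iff_isNNLSKKT :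
    IsNNLSSolution v b z ↔ IsNNLSKKT v z ((∑ i, z i • v i) - b) := by
  refine ⟨fun h => ?_, fun h => ?_⟩
  · obtain ⟨hc, hzc⟩ := (forall_nonneg_sum_sub_mul_nonneg_iff h.1).1
      ((isNNLSSolution_iff_forall_inner_nonneg h.1).1 h)
    exact ⟨h.1, hc, hzc⟩
  · exact (isNNLSSolution_iff_forall_inner_nonneg h.nonneg).2
      ((forall_nonneg_sum_sub_mul_nonneg_iff h.nonneg).2 ⟨h.inner_nonneg, h.mul_inner_eq_zero⟩)

theorem IsNNLSKKT.inner_sum_sub_smul_nonneg {r : E} (h : IsNNLSKKT v z r) {w : ι → ℝ}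
    (hw : ∀ i, 0 ≤ w i) : 0 ≤ ⟪∑ i, (w i - z i) • v i, r⟫ := by
  rw [real_inner_sum_smul_left]
  exact (forall_nonneg_sum_sub_mul_nonneg_iff h.nonneg).2 ⟨h.inner_nonneg, h.mul_inner_eq_zero⟩ w hw

theorem sum_sub_smul (w z : ι → ℝ) (v : ι → E) :
    ∑ i, (w i - z i) • v i = (∑ i, w i • v i) - ∑ i, z i • v i := by
  simp only [sub_smul, Finset.sum_sub_distrib]

theorem IsNNLSSolution.unique (hv : LinearIndependent ℝ v) {z' : ι → ℝ}
    (h : IsNNLSSolution v b z) (h' : IsNNLSSolution v b z') : z = z' := by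
  set p := ∑ i, z i • v i
  set p' := ∑ i, z' i • v i
  have h₁ : 0 ≤ ⟪p' - p, p - b⟫ := by
    simpa only [sum_sub_smul] using
      (isNNLSSolution_iff_isNNLSKKT.1 h).inner_sum_sub_smul_nonneg h'.1
  have h₂ : 0 ≤ ⟪p - p', p' - b⟫ := by
    simpa only [sum_sub_smul] using
      (isNNLSSolution_iff_isNNLSKKT.1 h').inner_sum_sub_smul_nonneg h.1
  have hpp' : ‖p - p'‖ ^ 2 = -⟪p' - p, p - b⟫ - ⟪p - p', p' - b⟫ := by
    rw [← real_inner_self_eq_norm_sq, ← inner_neg_left, neg_sub, ← inner_sub_right,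
      sub_sub_sub_cancel_right]
  have hp : p = p' := sub_eq_zero.1 (pow_eq_zero_iff two_ne_zero |>.1
    (le_antisymm (by linarith) (sq_nonneg _)) |> norm_eq_zero.1)
  exact funext (Fintype.linearIndependent_iffₛ.1 hv z z' hp)

theorem IsNNLSKKT.norm_sub_sq_le {z' : ι → ℝ} {g R S : E} {c : ℝ} (hR : IsNNLSKKT v z R)
    (hS : IsNNLSKKT v z' S) (hgS : ⟪g, S⟫ = 0) (hRS : R - S = ∑ i, (z i - z' i) • v i + c • g) :
    ‖R - S‖ ^ 2 ≤ c * ⟪g, R⟫ := by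
  have hR' := hR.inner_sum_sub_smul_nonneg hS.nonneg
  have hS' := hS.inner_sum_sub_smul_nonneg hR.nonneg
  have hneg : ∑ i, (z' i - z i) • v i = -∑ i, (z i - z' i) • v i := by
    rw [sum_sub_smul, sum_sub_smul, neg_sub]
  calc ‖R - S‖ ^ 2 = ⟪R - S, R⟫ - ⟪R - S, S⟫ := by
        rw [← inner_sub_right, real_inner_self_eq_norm_sq]
    _ = -⟪∑ i, (z' i - z i) • v i, R⟫ + c * ⟪g, R⟫ - ⟪∑ i, (z i - z' i) • v i, S⟫ := by
        rw [hRS, inner_add_left, inner_add_left, real_inner_smul_left, real_inner_smul_left, hgS,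
          hneg, inner_neg_left, neg_neg, mul_zero, add_zero]
    _ ≤ c * ⟪g, R⟫ := by linarith

theorem IsNNLSKKT.inner_nonneg_and_max_mul_eq_zero {z' : ι → ℝ} {g R S : E} {t : ℝ}
    (hR : IsNNLSKKT v z R) (hS : IsNNLSKKT v z' S) (hgS : ⟪g, S⟫ = 0)
    (hRS : R - S = ∑ i, (z i - z' i) • v i + (max t 0 - t) • g) :
    0 ≤ ⟪g, R⟫ ∧ max t 0 * ⟪g, R⟫ = 0 := by
  by_cases hRS' : R = S
  · simp [hRS', hgS]
  have hpos : 0 < (max t 0 - t) * ⟪g, R⟫ :=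
    (pow_pos (norm_pos_iff.2 (sub_ne_zero.2 hRS')) 2).trans_le (hR.norm_sub_sq_le hS hgS hRS)
  have ht : t < 0 := by
    by_contra! ht
    simp [max_eq_left ht] at hpos
  rw [max_eq_right ht.le] at hpos ⊢
  rw [zero_sub] at hpos
  exact ⟨(pos_of_mul_pos_right hpos (neg_pos.2 ht).le).le, zero_mul _⟩

theorem IsNNLSKKT.snoc {k : ℕ} {v : Fin k → E} {z : Fin k → ℝ} {g r : E} {t : ℝ}
    (h : IsNNLSKKT v z r) (ht : 0 ≤ t) (hg : 0 ≤ ⟪g, r⟫) (htg : t * ⟪g, r⟫ = 0) :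
    IsNNLSKKT (Fin.snoc v g : Fin (k + 1) → E) (Fin.snoc z t) r := by
  refine ⟨Fin.lastCases ?_ ?_, Fin.lastCases ?_ ?_, Fin.lastCases ?_ ?_⟩ <;>
    simp [ht, hg, htg, h.nonneg, h.inner_nonneg, h.mul_inner_eq_zero]

theorem isNNLSSolution_snoc_iff {k : ℕ} {v : Fin k → E} {g b : E} {z : Fin k → ℝ} {t : ℝ} :
    IsNNLSSolution (Fin.snoc v g : Fin (k + 1) → E) b (Fin.snoc z t) ↔
      (∀ i, 0 ≤ z i) ∧ 0 ≤ t ∧ ∀ (w : Fin k → ℝ) (u : ℝ), (∀ i, 0 ≤ w i) → 0 ≤ u →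
        ‖(∑ i, z i • v i) + t • g - b‖ ≤ ‖(∑ i, w i • v i) + u • g - b‖ := by
  have hnonneg : ∀ (w : Fin k → ℝ) (u : ℝ),
      (∀ i, 0 ≤ (Fin.snoc w u : Fin (k + 1) → ℝ) i) ↔ (∀ i, 0 ≤ w i) ∧ 0 ≤ u := by
    simp [Fin.forall_fin_succ']
  rw [IsNNLSSolution, hnonneg, and_assoc, sum_snoc_smul_snoc]
  refine and_congr_right fun _ => and_congr_right fun _ => ⟨fun h w u hw hu => ?_, fun h w hw => ?_⟩
  · simpa [sum_snoc_smul_snoc] using h (Fin.snoc w u) ((hnonneg w u).2 ⟨hw, hu⟩)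
  · rw [← Fin.snoc_init_self w, hnonneg] at hw
    rw [← Fin.snoc_init_self w, sum_snoc_smul_snoc]
    exact h _ _ hw.1 hw.2

theorem real_inner_sub_inner_div_norm_sq_smul_eq_zero (g x : E) :
    ⟪g, x - (⟪g, x⟫ / ‖g‖ ^ 2) • g⟫ = 0 := by
  rcases eq_or_ne g 0 with rfl | hg
  · simp
  rw [inner_sub_right, real_inner_smul_right, real_inner_self_eq_norm_sq,
    div_mul_cancel₀ _ (by positivity), sub_self]

theorem sum_smul_sub_inner_div_norm_sq_smul (z : ι → ℝ) (v : ι → E) (b g : E) :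
    (∑ i, z i • (v i - (⟪g, v i⟫ / ‖g‖ ^ 2) • g)) - (b - (⟪g, b⟫ / ‖g‖ ^ 2) • g) =
      (∑ i, z i • v i) - b - (⟪g, (∑ i, z i • v i) - b⟫ / ‖g‖ ^ 2) • g := by
  simp only [inner_sub_right, inner_sum, real_inner_smul_right, smul_sub, Finset.sum_sub_distrib,
    smul_smul, ← Finset.sum_smul, sub_div, Finset.sum_div, mul_div_assoc]
  module

end NNLS

theorem stmt6_general {m k : ℕ} (G : Fin k → EuclideanSpace ℝ (Fin m))
    (g : EuclideanSpace ℝ (Fin m)) (b : EuclideanSpace ℝ (Fin m))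
    (hG : LinearIndependent ℝ G)
    (hGg : LinearIndependent ℝ (Fin.snoc G g : Fin (k + 1) → EuclideanSpace ℝ (Fin m)))
    (s : (Fin k → EuclideanSpace ℝ (Fin m)) → EuclideanSpace ℝ (Fin m) → (Fin k → ℝ))
    (hs : ∀ (G' : Fin k → EuclideanSpace ℝ (Fin m)) (b' : EuclideanSpace ℝ (Fin m)),
      LinearIndependent ℝ G' →
        ((∀ i, 0 ≤ s G' b' i) ∧
         (∀ z : Fin k → ℝ, (∀ i, 0 ≤ z i) →
            ‖(∑ i, s G' b' i • G' i) - b'‖ ≤ ‖(∑ i, z i • G' i) - b'‖) ∧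
         (∀ z : Fin k → ℝ, (∀ i, 0 ≤ z i) →
            (∀ w : Fin k → ℝ, (∀ i, 0 ≤ w i) →
              ‖(∑ i, z i • G' i) - b'‖ ≤ ‖(∑ i, w i • G' i) - b'‖) → z = s G' b'))) :
    -- the candidate solution
    (let Gt : Fin k → EuclideanSpace ℝ (Fin m) := fun j => G j - (⟪g, G j⟫ / ‖g‖ ^ 2) • g
     let bt : EuclideanSpace ℝ (Fin m) := b - (⟪g, b⟫ / ‖g‖ ^ 2) • g
     let ystar : ℝ := (max ⟪g, b - ∑ i, s Gt bt i • G i⟫ 0) / ‖g‖ ^ 2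
     let Ystar : Fin k → ℝ := s G (b - ystar • g)
     (0 ≤ ystar) ∧ (∀ i, 0 ≤ Ystar i) ∧
     (∀ (z : Fin k → ℝ) (u : ℝ), (∀ i, 0 ≤ z i) → 0 ≤ u →
        ‖(∑ i, Ystar i • G i) + ystar • g - b‖ ≤ ‖(∑ i, z i • G i) + u • g - b‖) ∧
     (∀ (y : Fin k → ℝ) (t : ℝ), (∀ i, 0 ≤ y i) → 0 ≤ t →
        (∀ (z : Fin k → ℝ) (u : ℝ), (∀ i, 0 ≤ z i) → 0 ≤ u →
          ‖(∑ i, y i • G i) + t • g - b‖ ≤ ‖(∑ i, z i • G i) + u • g - b‖) →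
        t = ystar ∧ y = Ystar)) := by
  intro Gt bt ystar Ystar
  have hsol : ∀ G' b', LinearIndependent ℝ G' → IsNNLSSolution G' b' (s G' b') :=
    fun G' b' h => ⟨(hs G' b' h).1, (hs G' b' h).2.1⟩
  set yh := s Gt bt
  set t := ⟪g, b - ∑ i, yh i • G i⟫ / ‖g‖ ^ 2
  have hystar : ystar = max t 0 := by
    rw [← zero_div (‖g‖ ^ 2), max_div_div_right (sq_nonneg ‖g‖)]
  set S := (∑ i, yh i • Gt i) - bt
  have hS_eq : S = (∑ i, yh i • G i) - b - (⟪g, (∑ i, yh i • G i) - b⟫ / ‖g‖ ^ 2) • g :=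
    sum_smul_sub_inner_div_norm_sq_smul yh G b g
  have hgS : ⟪g, S⟫ = 0 := hS_eq ▸ real_inner_sub_inner_div_norm_sq_smul_eq_zero g _
  have hS : IsNNLSKKT G yh S :=
    (isNNLSSolution_iff_isNNLSKKT.1 (hsol Gt bt (hGg.sub_smul_of_snoc _))).of_sub_smul hgS
  have hR : IsNNLSKKT G Ystar ((∑ i, Ystar i • G i) + ystar • g - b) := by
    rw [← sub_sub_eq_add_sub]
    exact isNNLSSolution_iff_isNNLSKKT.1 (hsol G _ hG)
  have hRS : (∑ i, Ystar i • G i) + ystar • g - b - S =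
      ∑ i, (Ystar i - yh i) • G i + (max t 0 - t) • g := by
    have ht : ⟪g, (∑ i, yh i • G i) - b⟫ / ‖g‖ ^ 2 = -t := by
      rw [← neg_sub, inner_neg_right, neg_div]
    rw [hS_eq, ht, sum_sub_smul, ← hystar]
    module
  obtain ⟨hgR, hgR_compl⟩ := hR.inner_nonneg_and_max_mul_eq_zero hS hgS hRS
  rw [← hystar] at hgR_compl
  have hopt : IsNNLSSolution (Fin.snoc G g : Fin (k + 1) → _) b (Fin.snoc Ystar ystar) := by
    rw [isNNLSSolution_iff_isNNLSKKT, sum_snoc_smul_snoc]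
    exact hR.snoc (hystar ▸ le_max_right t 0) hgR hgR_compl
  obtain ⟨hYstar, hystar_nonneg, hmin⟩ := isNNLSSolution_snoc_iff.1 hopt
  refine ⟨hystar_nonneg, hYstar, hmin, fun y u hy hu hyu => ?_⟩
  obtain ⟨rfl, rfl⟩ :=
    Fin.snoc_injective2 ((isNNLSSolution_snoc_iff.2 ⟨hy, hu, hyu⟩).unique hGg hopt)
  exact ⟨rfl, rfl⟩

/-- Recursive formula for rank-(k+1) NLS: with s(G', b') denoting the unique
nonnegative least squares solution for a full-column-rank G', the unique solution
(y*, y*_{k+1}) of min_{y ≥ 0, y_{k+1} ≥ 0} ‖G y + g y_{k+1} − b‖ is given by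
y*_{k+1} = [gᵀ(b − G·s(G̃, b̃))]₊/‖g‖² and y* = s(G, b − g y*_{k+1}), where
G̃ = (I − g gᵀ/‖g‖²)G and b̃ = (I − g gᵀ/‖g‖²)b. -/
theorem stmt6 {m k : ℕ} (G : Fin k → EuclideanSpace ℝ (Fin m))
    (g : EuclideanSpace ℝ (Fin m)) (b : EuclideanSpace ℝ (Fin m))
    (hG : LinearIndependent ℝ G) (hg : g ≠ 0)
    (hGg : LinearIndependent ℝ (Fin.snoc G g : Fin (k + 1) → EuclideanSpace ℝ (Fin m)))
    (s : (Fin k → EuclideanSpace ℝ (Fin m)) → EuclideanSpace ℝ (Fin m) → (Fin k → ℝ))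
    (hs : ∀ (G' : Fin k → EuclideanSpace ℝ (Fin m)) (b' : EuclideanSpace ℝ (Fin m)),
      LinearIndependent ℝ G' →
        ((∀ i, 0 ≤ s G' b' i) ∧
         (∀ z : Fin k → ℝ, (∀ i, 0 ≤ z i) →
            ‖(∑ i, s G' b' i • G' i) - b'‖ ≤ ‖(∑ i, z i • G' i) - b'‖) ∧
         (∀ z : Fin k → ℝ, (∀ i, 0 ≤ z i) →
            (∀ w : Fin k → ℝ, (∀ i, 0 ≤ w i) →
              ‖(∑ i, z i • G' i) - b'‖ ≤ ‖(∑ i, w i • G' i) - b'‖) → z = s G' b'))) :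
    -- the candidate solution
    (let Gt : Fin k → EuclideanSpace ℝ (Fin m) := fun j => G j - (⟪g, G j⟫ / ‖g‖ ^ 2) • g
     let bt : EuclideanSpace ℝ (Fin m) := b - (⟪g, b⟫ / ‖g‖ ^ 2) • g
     let ystar : ℝ := (max ⟪g, b - ∑ i, s Gt bt i • G i⟫ 0) / ‖g‖ ^ 2
     let Ystar : Fin k → ℝ := s G (b - ystar • g)
     (0 ≤ ystar) ∧ (∀ i, 0 ≤ Ystar i) ∧
     (∀ (z : Fin k → ℝ) (u : ℝ), (∀ i, 0 ≤ z i) → 0 ≤ u →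
        ‖(∑ i, Ystar i • G i) + ystar • g - b‖ ≤ ‖(∑ i, z i • G i) + u • g - b‖) ∧
     (∀ (y : Fin k → ℝ) (t : ℝ), (∀ i, 0 ≤ y i) → 0 ≤ t →
        (∀ (z : Fin k → ℝ) (u : ℝ), (∀ i, 0 ≤ z i) → 0 ≤ u →
          ‖(∑ i, y i • G i) + t • g - b‖ ≤ ‖(∑ i, z i • G i) + u • g - b‖) →
        t = ystar ∧ y = Ystar)) :=
  stmt6_general G g b hG hGg s hs
end

section
/- Let g₁, g₂ ∈ ℝ^m with G = [g₁ g₂] of rank 2, and let b ∈ ℝ^m. Then the unique solution of min_{y₁,y₂ ≥ 0} ‖y₁ g₁ + y₂ g₂ − b‖ is given by y₂* = (1/‖g₂‖²)·[bᵀg₂ − (g₂ᵀg₁)·[(‖g₂‖² bᵀg₁ − bᵀg₂·g₂ᵀg₁)/(‖g₁‖²‖g₂‖² − (g₁ᵀg₂)²)]₊]₊ and y₁* = (1/‖g₁‖²)·[bᵀg₁ − (g₂ᵀg₁) y₂*]₊. -/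
open scoped RealInnerProductSpace

/-!
A point `y ≥ 0` whose residual `r = ∑ yᵢ • gᵢ - b` satisfies the KKT conditions `⟪r, gᵢ⟫ ≥ 0`
and `yᵢ ⟪r, gᵢ⟫ = 0` is a minimiser: for every `z ≥ 0`, expanding
`‖r + ∑ (zᵢ - yᵢ) • gᵢ‖²` gives `‖r‖² + ‖∑ (zᵢ - yᵢ) • gᵢ‖² ≤ ‖∑ zᵢ • gᵢ - b‖²`, and the
second term vanishes only at `z = y` when the `gᵢ` are independent.

So it suffices to check the KKT conditions for the closed form. In Gram coordinates
`a = ‖g₁‖²`, `c = ⟪g₁, g₂⟫`, `d = ‖g₂‖²`, `βᵢ = ⟪b, gᵢ⟫` (independence gives `c² < a d`),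
`y₁ = [β₁ - c y₂]₊ / a` is the best first coordinate for the given `y₂`, and
`y₂ = [β₂ - c t]₊ / d` is the best second coordinate for the first coordinate
`t = [(d β₁ - c β₂) / (a d - c²)]₊`, the clipped unconstrained optimum. When `y₂ > 0`
one computes `y₁ = t`; when `y₂ = 0` a sign analysis gives `a β₂ ≤ c [β₁]₊`, i.e. `⟪r, g₂⟫ ≥ 0`.
-/

structure IsNNLSKKTPoint {ι E : Type*} [Fintype ι] [NormedAddCommGroup E] [InnerProductSpace ℝ E]
    (g : ι → E) (b : E) (y : ι → ℝ) : Prop where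
  nonneg : 0 ≤ y
  inner_residual_nonneg : ∀ i, 0 ≤ ⟪∑ j, y j • g j - b, g i⟫
  mul_inner_residual_eq_zero : ∀ i, y i * ⟪∑ j, y j • g j - b, g i⟫ = 0

namespace IsNNLSKKTPoint

variable {ι E : Type*} [Fintype ι] [NormedAddCommGroup E] [InnerProductSpace ℝ E]
  {g : ι → E} {b : E} {y z : ι → ℝ}

theorem norm_sq_add_norm_sq_le (h : IsNNLSKKTPoint g b y) (hz : 0 ≤ z) :
    ‖∑ j, y j • g j - b‖ ^ 2 + ‖∑ j, (z j - y j) • g j‖ ^ 2 ≤ ‖∑ j, z j • g j - b‖ ^ 2 := by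
  have hsplit : ∑ j, z j • g j - b = (∑ j, y j • g j - b) + ∑ j, (z j - y j) • g j := by
    simp only [sub_smul, Finset.sum_sub_distrib]; abel
  have hinner : ⟪∑ j, y j • g j - b, ∑ j, (z j - y j) • g j⟫
      = ∑ j, z j * ⟪∑ j, y j • g j - b, g j⟫ := by
    simp only [inner_sum, real_inner_smul_right, sub_mul, h.mul_inner_residual_eq_zero, sub_zero]
  have hdescent : 0 ≤ ⟪∑ j, y j • g j - b, ∑ j, (z j - y j) • g j⟫ :=
    hinner ▸ Finset.sum_nonneg fun j _ => mul_nonneg (hz j) (h.inner_residual_nonneg j)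
  rw [hsplit, norm_add_sq_real]
  linarith

theorem norm_le (h : IsNNLSKKTPoint g b y) (hz : 0 ≤ z) :
    ‖∑ j, y j • g j - b‖ ≤ ‖∑ j, z j • g j - b‖ :=
  le_of_sq_le_sq ((le_add_of_nonneg_right (sq_nonneg _)).trans (h.norm_sq_add_norm_sq_le hz))
    (norm_nonneg _)

theorem eq_of_forall_norm_le (h : IsNNLSKKTPoint g b y) (hg : LinearIndependent ℝ g)
    (hz : 0 ≤ z)
    (hmin : ∀ w : ι → ℝ, 0 ≤ w → ‖∑ j, z j • g j - b‖ ≤ ‖∑ j, w j • g j - b‖) : z = y := by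
  have hle := (h.norm_sq_add_norm_sq_le hz).trans
    (pow_le_pow_left₀ (norm_nonneg _) (hmin y h.nonneg) 2)
  have hzero : ∑ j, (z j - y j) • g j = 0 := by
    rw [← norm_eq_zero, ← sq_eq_zero_iff]
    linarith [sq_nonneg ‖∑ j, (z j - y j) • g j‖]
  funext j
  exact sub_eq_zero.mp (Fintype.linearIndependent_iff.mp hg _ hzero j)

end IsNNLSKKTPoint

section Gram

variable {E : Type*} [NormedAddCommGroup E] [InnerProductSpace ℝ E]

theorem sq_inner_lt_norm_sq_mul_norm_sq_of_linearIndependent {x y : E}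
    (h : LinearIndependent ℝ ![x, y]) : ⟪x, y⟫ ^ 2 < ‖x‖ ^ 2 * ‖y‖ ^ 2 := by
  have hdet := (Matrix.posDef_gram_of_linearIndependent h).det_pos
  simp only [Matrix.det_fin_two, Matrix.gram_apply, Matrix.cons_val_zero, Matrix.cons_val_one,
    real_inner_self_eq_norm_sq, real_inner_comm x y] at hdet
  linarith

theorem isNNLSKKTPoint_pair {g₁ g₂ b : E} {y₁ y₂ : ℝ} (hy₁ : 0 ≤ y₁) (hy₂ : 0 ≤ y₂)
    (hs₁ : 0 ≤ ‖g₁‖ ^ 2 * y₁ - (⟪b, g₁⟫ - ⟪g₁, g₂⟫ * y₂))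
    (hcs₁ : y₁ * (‖g₁‖ ^ 2 * y₁ - (⟪b, g₁⟫ - ⟪g₁, g₂⟫ * y₂)) = 0)
    (hs₂ : 0 ≤ ‖g₂‖ ^ 2 * y₂ - (⟪b, g₂⟫ - ⟪g₁, g₂⟫ * y₁))
    (hcs₂ : y₂ * (‖g₂‖ ^ 2 * y₂ - (⟪b, g₂⟫ - ⟪g₁, g₂⟫ * y₁)) = 0) :
    IsNNLSKKTPoint ![g₁, g₂] b ![y₁, y₂] := by
  have hres₁ : ⟪y₁ • g₁ + y₂ • g₂ - b, g₁⟫ = ‖g₁‖ ^ 2 * y₁ - (⟪b, g₁⟫ - ⟪g₁, g₂⟫ * y₂) := by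
    simp only [inner_sub_left, inner_add_left, real_inner_smul_left, real_inner_self_eq_norm_sq,
      real_inner_comm g₁ g₂]
    ring
  have hres₂ : ⟪y₁ • g₁ + y₂ • g₂ - b, g₂⟫ = ‖g₂‖ ^ 2 * y₂ - (⟪b, g₂⟫ - ⟪g₁, g₂⟫ * y₁) := by
    simp only [inner_sub_left, inner_add_left, real_inner_smul_left, real_inner_self_eq_norm_sq]
    ring
  have hsum : ∑ j, ![y₁, y₂] j • ![g₁, g₂] j = y₁ • g₁ + y₂ • g₂ := by simp [Fin.sum_univ_two]
  refine ⟨?_, ?_, ?_⟩ <;>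
    simp only [Pi.le_def, Fin.forall_fin_two, Pi.zero_apply, Matrix.cons_val_zero,
      Matrix.cons_val_one, hsum, hres₁, hres₂]
  exacts [⟨hy₁, hy₂⟩, ⟨hs₁, hs₂⟩, ⟨hcs₁, hcs₂⟩]

end Gram

lemma kkt_of_eq_max_div {a u y : ℝ} (ha : 0 < a) (hy : y = max u 0 / a) :
    0 ≤ a * y - u ∧ y * (a * y - u) = 0 := by
  subst hy
  rw [mul_div_cancel₀ _ ha.ne']
  rcases le_total u 0 with hu | hu
  · simp [hu]
  · simp [max_eq_left hu]

lemma mul_le_mul_max_of_le_mul_max {a c d β₁ β₂ : ℝ} (ha : 0 < a) (hd : 0 < d)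
    (hD : c ^ 2 < a * d) (h : β₂ ≤ c * max ((d * β₁ - β₂ * c) / (a * d - c ^ 2)) 0) :
    a * β₂ ≤ c * max β₁ 0 := by
  have hD' : 0 < a * d - c ^ 2 := sub_pos.mpr hD
  rcases le_or_gt (d * β₁ - β₂ * c) 0 with hu | hu
  · rw [max_eq_right (div_nonpos_of_nonpos_of_nonneg hu hD'.le), mul_zero] at h
    rcases le_total β₁ 0 with hβ₁ | hβ₁
    · rw [max_eq_right hβ₁, mul_zero]
      nlinarith
    · rw [max_eq_left hβ₁]
      rcases le_total c 0 with hc | hc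
      · nlinarith [mul_nonneg_of_nonpos_of_nonpos hc hu]
      · nlinarith [mul_nonneg hc (neg_nonneg.mpr h)]
  · rw [max_eq_left (div_pos hu hD').le, mul_div_assoc', le_div_iff₀ hD'] at h
    have hβ : a * β₂ ≤ c * β₁ := by nlinarith
    rcases le_total β₁ 0 with hβ₁ | hβ₁
    · rw [max_eq_right hβ₁, mul_zero]
      by_contra! hpos
      have hβ₂ : 0 < β₂ := pos_of_mul_pos_right hpos ha.le
      have hc : c < 0 := by nlinarith
      nlinarith [mul_pos (neg_pos.mpr hc) hu, mul_pos hβ₂ hD']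
    · rwa [max_eq_left hβ₁]

lemma max_div_eq_of_mul_eq {a c d β₁ β₂ t y₂ : ℝ} (ha : 0 < a) (hd : 0 < d)
    (hD : c ^ 2 < a * d) (ht : t = max ((d * β₁ - β₂ * c) / (a * d - c ^ 2)) 0)
    (hy₂ : d * y₂ = β₂ - c * t) :
    max (β₁ - c * y₂) 0 / a = t := by
  have hD' : 0 < a * d - c ^ 2 := sub_pos.mpr hD
  rcases le_or_gt (d * β₁ - β₂ * c) 0 with hu | hu
  · rw [max_eq_right (div_nonpos_of_nonpos_of_nonneg hu hD'.le)] at ht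
    subst ht
    have hfst : d * (β₁ - c * y₂) = d * β₁ - β₂ * c := by linear_combination (-c) * hy₂
    rw [max_eq_right (nonpos_of_mul_nonpos_right (hfst ▸ hu) hd), zero_div]
  · rw [max_eq_left (div_pos hu hD').le] at ht
    have htD : (a * d - c ^ 2) * t = d * β₁ - β₂ * c := by
      rw [ht, mul_div_cancel₀ _ hD'.ne']
    have hfst : β₁ - c * y₂ = a * t :=
      mul_left_cancel₀ hd.ne' (by linear_combination (-c) * hy₂ - htD)
    rw [hfst, max_eq_left (mul_nonneg ha.le (ht ▸ (div_pos hu hD').le)),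
      mul_div_cancel_left₀ _ ha.ne']

lemma kkt_snd_of_closedForm {a c d β₁ β₂ y₁ y₂ : ℝ} (ha : 0 < a) (hd : 0 < d)
    (hD : c ^ 2 < a * d)
    (hy₂ : y₂ = max (β₂ - c * max ((d * β₁ - β₂ * c) / (a * d - c ^ 2)) 0) 0 / d)
    (hy₁ : y₁ = max (β₁ - c * y₂) 0 / a) :
    0 ≤ d * y₂ - (β₂ - c * y₁) ∧ y₂ * (d * y₂ - (β₂ - c * y₁)) = 0 := by
  obtain ⟨hs, hcs⟩ := kkt_of_eq_max_div hd hy₂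
  have hy₂_nonneg : 0 ≤ y₂ := hy₂ ▸ div_nonneg (le_max_right _ _) hd.le
  rcases hy₂_nonneg.eq_or_lt with rfl | hy₂_pos
  · rw [mul_zero, sub_zero] at hy₁
    refine ⟨?_, zero_mul _⟩
    rw [mul_zero, zero_sub, neg_nonneg, sub_nonpos] at hs
    have := mul_le_mul_max_of_le_mul_max ha hd hD hs
    rw [hy₁, mul_div_assoc', mul_zero, zero_sub, neg_sub, sub_nonneg, le_div_iff₀ ha]
    linarith
  · have hdy₂ : d * y₂ = β₂ - c * max ((d * β₁ - β₂ * c) / (a * d - c ^ 2)) 0 := by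
      linarith [(mul_eq_zero.mp hcs).resolve_left hy₂_pos.ne']
    have hy₁t := hy₁.trans (max_div_eq_of_mul_eq ha hd hD rfl hdy₂)
    rw [hdy₂, hy₁t]
    simp

/-- Closed-form solution of the rank-2 NLS problem min_{y₁,y₂ ≥ 0} ‖y₁g₁ + y₂g₂ − b‖. -/
theorem stmt7 {m : ℕ} (g₁ g₂ b : EuclideanSpace ℝ (Fin m))
    (hG : LinearIndependent ℝ ![g₁, g₂]) :
    let y₂ : ℝ := (max (⟪b, g₂⟫ - ⟪g₂, g₁⟫ *
        max ((‖g₂‖ ^ 2 * ⟪b, g₁⟫ - ⟪b, g₂⟫ * ⟪g₂, g₁⟫) /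
          (‖g₁‖ ^ 2 * ‖g₂‖ ^ 2 - ⟪g₁, g₂⟫ ^ 2)) 0) 0) / ‖g₂‖ ^ 2
    let y₁ : ℝ := (max (⟪b, g₁⟫ - ⟪g₂, g₁⟫ * y₂) 0) / ‖g₁‖ ^ 2
    (0 ≤ y₁ ∧ 0 ≤ y₂) ∧
    (∀ z₁ z₂ : ℝ, 0 ≤ z₁ → 0 ≤ z₂ →
        ‖y₁ • g₁ + y₂ • g₂ - b‖ ≤ ‖z₁ • g₁ + z₂ • g₂ - b‖) ∧
    (∀ z₁ z₂ : ℝ, 0 ≤ z₁ → 0 ≤ z₂ →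
        (∀ w₁ w₂ : ℝ, 0 ≤ w₁ → 0 ≤ w₂ →
          ‖z₁ • g₁ + z₂ • g₂ - b‖ ≤ ‖w₁ • g₁ + w₂ • g₂ - b‖) →
        z₁ = y₁ ∧ z₂ = y₂) := by
  intro y₂ y₁
  have hg₁ : 0 < ‖g₁‖ ^ 2 := pow_pos (norm_pos_iff.mpr (by simpa using hG.ne_zero 0)) 2
  have hg₂ : 0 < ‖g₂‖ ^ 2 := pow_pos (norm_pos_iff.mpr (by simpa using hG.ne_zero 1)) 2
  have hgram := sq_inner_lt_norm_sq_mul_norm_sq_of_linearIndependent hG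
  have hy₁ : y₁ = max (⟪b, g₁⟫ - ⟪g₁, g₂⟫ * y₂) 0 / ‖g₁‖ ^ 2 := by
    simp only [y₁, real_inner_comm g₁ g₂]
  obtain ⟨hs₁, hcs₁⟩ := kkt_of_eq_max_div hg₁ hy₁
  obtain ⟨hs₂, hcs₂⟩ := kkt_snd_of_closedForm (β₁ := ⟪b, g₁⟫) (β₂ := ⟪b, g₂⟫) hg₁ hg₂ hgram
    (by simp only [y₂, real_inner_comm g₁ g₂]) hy₁
  have hkkt := isNNLSKKTPoint_pair (div_nonneg (le_max_right _ _) hg₁.le)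
    (div_nonneg (le_max_right _ _) hg₂.le) hs₁ hcs₁ hs₂ hcs₂
  have hsum : ∀ w : Fin 2 → ℝ, ∑ j, w j • ![g₁, g₂] j = w 0 • g₁ + w 1 • g₂ := fun w => by
    simp [Fin.sum_univ_two]
  refine ⟨⟨hkkt.nonneg 0, hkkt.nonneg 1⟩, fun z₁ z₂ hz₁ hz₂ => ?_, fun z₁ z₂ hz₁ hz₂ hmin => ?_⟩
  · simpa [hsum] using hkkt.norm_le (z := ![z₁, z₂]) (by simp [Pi.le_def, Fin.forall_fin_two, *])
  · have hz := hkkt.eq_of_forall_norm_le hG (z := ![z₁, z₂])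
      (by simp [Pi.le_def, Fin.forall_fin_two, *])
      (fun w hw => by simpa [hsum] using hmin (w 0) (w 1) (hw 0) (hw 1))
    simpa using hz
end

section
/- Let G' be obtained from full-column-rank G by appending a column, and suppose the NLS solution with the sign constraint dropped on the last coordinate yields value ỹ_{k+1} < 0 for that coordinate. Then the constrained minimum of ‖[G g]·(y; y_{k+1}) − b‖ over y ≥ 0, y_{k+1} ≥ 0 is attained with y_{k+1} = 0. Precisely: if the minimizer (ỹ, ỹ_{k+1}) of ‖G y + g y_{k+1} − b‖ over {y ≥ 0, y_{k+1} ∈ ℝ} has ỹ_{k+1} < 0, then the minimizer over {y ≥ 0, y_{k+1} ≥ 0} has last coordinate equal to 0. -/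
/-!
If a constrained minimizer had `t > 0`, the segment from it to the unconstrained minimizer
(where `t < 0`) would cross `t = 0` at a point that is still feasible. The residual is affine,
so by strict convexity of the norm that point would beat both endpoints unless their residuals
coincide; and equal residuals force equal last coordinates because `g ∉ span (range G)`.
-/

open Submodule Set

section LeastSquaresResidual

variable {ι E : Type*} [Fintype ι] [NormedAddCommGroup E] [NormedSpace ℝ E]
  (G : ι → E) (g b : E)

def lsResidual (y : ι → ℝ) (t : ℝ) : E := ∑ i, y i • G i + t • g - b

theorem lsResidual_combo (y y' : ι → ℝ) (t t' a c : ℝ) (hac : a + c = 1) :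
    lsResidual G g b (a • y + c • y') (a * t + c * t') =
      a • lsResidual G g b y t + c • lsResidual G g b y' t' := by
  have hb : b = a • b + c • b := by rw [← add_smul, hac, one_smul]
  simp only [lsResidual, Pi.add_apply, Pi.smul_apply, smul_eq_mul, add_smul, mul_smul,
    Finset.sum_add_distrib, ← Finset.smul_sum]
  nth_rewrite 1 [hb]
  module

variable {G g b}

theorem eq_of_lsResidual_eq (hg : g ∉ span ℝ (range G)) {y y' : ι → ℝ} {t t' : ℝ}
    (h : lsResidual G g b y t = lsResidual G g b y' t') : t = t' := by
  by_contra hne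
  apply hg
  have hdiff : (t - t') • g = ∑ i, (y' i - y i) • G i := by
    simp only [lsResidual, sub_left_inj] at h
    simp only [sub_smul, Finset.sum_sub_distrib]
    linear_combination (norm := module) h
  have hmem : (t - t') • g ∈ span ℝ (range G) :=
    hdiff ▸ sum_smul_mem _ _ fun i _ ↦ subset_span (mem_range_self i)
  exact (smul_mem_iff _ (sub_ne_zero.mpr hne)).mp hmem

theorem eq_zero_of_isMin_of_unconstrained_neg [StrictConvexSpace ℝ E]
    (hg : g ∉ span ℝ (range G)) {y' : ι → ℝ} {t' : ℝ} (hy' : ∀ i, 0 ≤ y' i)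
    (hmin' : ∀ (z : ι → ℝ) (u : ℝ), (∀ i, 0 ≤ z i) →
      ‖lsResidual G g b y' t'‖ ≤ ‖lsResidual G g b z u‖)
    (ht' : t' < 0) {y : ι → ℝ} {t : ℝ} (hy : ∀ i, 0 ≤ y i) (ht : 0 ≤ t)
    (hmin : ∀ (z : ι → ℝ) (u : ℝ), (∀ i, 0 ≤ z i) → 0 ≤ u →
      ‖lsResidual G g b y t‖ ≤ ‖lsResidual G g b z u‖) :
    t = 0 := by
  by_contra ht0
  have hpos : 0 < t := lt_of_le_of_ne ht (Ne.symm ht0)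
  have hden : 0 < t - t' := by linarith
  set a := -t' / (t - t') with ha_def
  set c := t / (t - t') with hc_def
  have ha : 0 < a := div_pos (neg_pos.mpr ht') hden
  have hc : 0 < c := div_pos hpos hden
  have hac : a + c = 1 := by rw [ha_def, hc_def]; field_simp; ring
  have hcross : a * t + c * t' = 0 := by rw [ha_def, hc_def]; ring
  have hz : ∀ i, 0 ≤ (a • y + c • y') i := fun i ↦
    add_nonneg (mul_nonneg ha.le (hy i)) (mul_nonneg hc.le (hy' i))
  have hmid := hmin _ 0 hz le_rfl
  rw [← hcross, lsResidual_combo G g b y y' t t' a c hac] at hmid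
  have hres : lsResidual G g b y t = lsResidual G g b y' t' := by
    by_contra hne
    exact hmid.not_gt (norm_combo_lt_of_ne le_rfl (hmin' y t hy) hne ha hc hac)
  linarith [eq_of_lsResidual_eq hg hres]

end LeastSquaresResidual

/-- If the minimizer of ‖G y + g t − b‖ over {y ≥ 0, t ∈ ℝ} has negative last
coordinate, then the minimizer over {y ≥ 0, t ≥ 0} has last coordinate 0. -/
theorem stmt17 {m k : ℕ} (G : Fin k → EuclideanSpace ℝ (Fin m))
    (g b : EuclideanSpace ℝ (Fin m))
    (hGg : LinearIndependent ℝ (Fin.snoc G g : Fin (k + 1) → EuclideanSpace ℝ (Fin m)))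
    (ytilde : Fin k → ℝ) (ttilde : ℝ)
    (hy_nonneg : ∀ i, 0 ≤ ytilde i)
    (hy_min : ∀ (z : Fin k → ℝ) (u : ℝ), (∀ i, 0 ≤ z i) →
        ‖(∑ i, ytilde i • G i) + ttilde • g - b‖ ≤ ‖(∑ i, z i • G i) + u • g - b‖)
    (ht_neg : ttilde < 0) :
    ∀ (y : Fin k → ℝ) (t : ℝ), (∀ i, 0 ≤ y i) → 0 ≤ t →
      (∀ (z : Fin k → ℝ) (u : ℝ), (∀ i, 0 ≤ z i) → 0 ≤ u →
        ‖(∑ i, y i • G i) + t • g - b‖ ≤ ‖(∑ i, z i • G i) + u • g - b‖) →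
      t = 0 := fun _ _ hy ht hmin ↦
  eq_zero_of_isMin_of_unconstrained_neg (linearIndependent_finSnoc.mp hGg).2 hy_nonneg hy_min
    ht_neg hy ht hmin
end
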